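/- arXiv:2312.09969 — 2 statements merged into one kernel-verified Lean document; each statement's English description precedes it below -/
import Mathlib

section
/- Let Z be a binomial random variable with parameters n and p, and let s be an integer with 0 < s < n and p ≥ s/n. Then P(Z ≤ s) ≤ s^{-s}·n^s·e^s·(1-p)^{n-s}·p^s. -/
/-!
Chernoff's method: for `0 < t ≤ 1` and `j ≤ s` we have `1 ≤ t ^ j / t ^ s`, so with `q = 1 - p`
the lower tail is at most `(p t + q) ^ n / t ^ s`. The minimising choice `t = s q / ((n - s) p)`,
which is `≤ 1` exactly when `s ≤ n p`, turns this into `(n p / s) ^ s (n q / (n - s)) ^ (n - s)`,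
and `(n / (n - s)) ^ (n - s) = (1 + s / (n - s)) ^ (n - s) ≤ e ^ s`.
-/

open Finset Real

theorem sum_range_choose_mul_pow_le_add_pow_div_pow {p q t : ℝ} (hp : 0 ≤ p) (hq : 0 ≤ q)
    (ht : 0 < t) (ht1 : t ≤ 1) {s n : ℕ} (hsn : s ≤ n) :
    ∑ j ∈ range (s + 1), (n.choose j : ℝ) * p ^ j * q ^ (n - j) ≤ (p * t + q) ^ n / t ^ s := by
  rw [add_pow, sum_div]
  calc ∑ j ∈ range (s + 1), (n.choose j : ℝ) * p ^ j * q ^ (n - j)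
      ≤ ∑ j ∈ range (s + 1), (p * t) ^ j * q ^ (n - j) * n.choose j / t ^ s := by
        gcongr with j hj
        have htj : t ^ s ≤ t ^ j :=
          pow_le_pow_of_le_one ht.le ht1 (Nat.lt_succ_iff.1 (mem_range.1 hj))
        rw [le_div_iff₀ (by positivity), mul_pow]
        calc (n.choose j : ℝ) * p ^ j * q ^ (n - j) * t ^ s
            ≤ (n.choose j : ℝ) * p ^ j * q ^ (n - j) * t ^ j := by gcongr
          _ = p ^ j * t ^ j * q ^ (n - j) * n.choose j := by ring
    _ ≤ ∑ j ∈ range (n + 1), (p * t) ^ j * q ^ (n - j) * n.choose j / t ^ s :=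
        sum_le_sum_of_subset_of_nonneg (range_subset_range.2 (by omega))
          fun _ _ _ ↦ by positivity

theorem sum_range_choose_mul_pow_le_chernoff {p q : ℝ} (hp : 0 < p) (hq : 0 < q) {s m : ℕ}
    (hs : 0 < s) (hm : 0 < m) (hsqmp : s * q ≤ m * p) :
    ∑ j ∈ range (s + 1), ((s + m).choose j : ℝ) * p ^ j * q ^ (s + m - j)
      ≤ ((s + m) * p / s) ^ s * ((s + m) * q / m) ^ m := by
  have hs' : (0 : ℝ) < s := by exact_mod_cast hs
  have hm' : (0 : ℝ) < m := by exact_mod_cast hm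
  have ht : 0 < s * q / (m * p) := by positivity
  have ht1 : s * q / (m * p) ≤ 1 := (div_le_one (by positivity)).2 hsqmp
  refine (sum_range_choose_mul_pow_le_add_pow_div_pow hp.le hq.le ht ht1 (by omega)).trans_eq ?_
  have hpt : p * (s * q / (m * p)) + q = (s + m) * q / m := by field_simp
  rw [hpt, pow_add, mul_div_right_comm, ← div_pow]
  congr 2
  field_simp

theorem one_add_div_pow_le_exp (x : ℝ) (hx : 0 ≤ x) (m : ℕ) : (1 + x / m) ^ m ≤ exp x := by
  simpa [sub_eq_add_neg, neg_div] using
    one_sub_div_pow_le_exp_neg (n := m) (t := -x) (by have := m.cast_nonneg (α := ℝ); linarith)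

theorem binomial_lower_tail_bound_general (n s : ℕ) (p : ℝ) (hs : 0 < s) (hsn : s < n)
    (hp1 : p ≤ 1) (hps : (s : ℝ) / n ≤ p) :
    ∑ j ∈ Finset.range (s + 1), (n.choose j : ℝ) * p ^ j * (1 - p) ^ (n - j)
      ≤ ((s : ℝ) ^ s)⁻¹ * (n : ℝ) ^ s * Real.exp s * (1 - p) ^ (n - s) * p ^ s := by
  obtain ⟨m, rfl⟩ : ∃ m, n = s + m := ⟨n - s, by omega⟩
  have hm : 0 < m := by omega
  have hs' : (0 : ℝ) < s := by exact_mod_cast hs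
  have hm' : (0 : ℝ) < m := by exact_mod_cast hm
  rw [Nat.add_sub_cancel_left]
  push_cast at hps ⊢
  have hp : 0 < p := (by positivity : (0 : ℝ) < s / (s + m)).trans_le hps
  rcases (sub_nonneg.2 hp1).eq_or_lt with hq | hq
  · rw [← hq, zero_pow hm.ne', mul_zero, zero_mul]
    refine (sum_eq_zero fun j hj ↦ ?_).le
    rw [zero_pow (by have := mem_range.1 hj; omega), mul_zero]
  have hsqmp : s * (1 - p) ≤ m * p := by
    rw [div_le_iff₀ (by positivity)] at hps
    linarith
  calc _ ≤ ((s + m) * p / s) ^ s * ((s + m) * (1 - p) / m) ^ m := by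
        exact_mod_cast sum_range_choose_mul_pow_le_chernoff hp hq hs hm hsqmp
    _ = ((s : ℝ) ^ s)⁻¹ * (s + m) ^ s * (1 + s / m) ^ m * (1 - p) ^ m * p ^ s := by
        rw [one_add_div hm'.ne', add_comm (m : ℝ), mul_div_right_comm, mul_div_right_comm,
          mul_pow, mul_pow, div_pow]
        ring
    _ ≤ _ := by
        gcongr
        exact one_add_div_pow_le_exp s hs'.le m

/-- Chernoff-type bound for the lower tail of a Binomial(n, p) random variable:
if `0 < s < n` and `p ≥ s/n`, then `P(Z ≤ s) ≤ s^{-s} n^s e^s (1-p)^{n-s} p^s`. -/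
theorem binomial_lower_tail_bound (n s : ℕ) (p : ℝ) (hs : 0 < s) (hsn : s < n)
    (hp0 : 0 ≤ p) (hp1 : p ≤ 1) (hps : (s : ℝ) / n ≤ p) :
    ∑ j ∈ Finset.range (s + 1), (n.choose j : ℝ) * p ^ j * (1 - p) ^ (n - j)
      ≤ ((s : ℝ) ^ s)⁻¹ * (n : ℝ) ^ s * Real.exp s * (1 - p) ^ (n - s) * p ^ s :=
  binomial_lower_tail_bound_general n s p hs hsn hp1 hps
end

section
/- Suppose Q̂_n is a sequence of random probability measures such that for each integrable h, Q̂_n(h) → Q(h) almost surely, where Q is a fixed probability measure with Q(h²) < ∞. Then for each ε > 0, almost surely, Q̂_n(h²·1_{|h| > ε√n}) → 0 as n → ∞. -/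
open MeasureTheory Filter Real

/-- If random probability measures `Q̂_n` satisfy `Q̂_n(g) → Q(g)` a.s. for every
`Q`-integrable `g`, and `Q(h²) < ∞`, then the Lindeberg-type quantity
`Q̂_n(h² 1_{|h| > ε√n})` tends to `0` almost surely, for every `ε > 0`. -/
theorem lindeberg_condition_of_slln
    {Ω E : Type*} [MeasurableSpace Ω] [MeasurableSpace E]
    (μ : Measure Ω) [IsProbabilityMeasure μ]
    (Qhat : ℕ → Ω → Measure E) (hQhat : ∀ n ω, IsProbabilityMeasure (Qhat n ω))
    (Q : Measure E) [IsProbabilityMeasure Q]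
    (hconv : ∀ g : E → ℝ, Integrable g Q →
      ∀ᵐ ω ∂μ, Tendsto (fun n => ∫ x, g x ∂(Qhat n ω)) atTop (nhds (∫ x, g x ∂Q)))
    (h : E → ℝ) (hmeas : Measurable h) (hL2 : Integrable (fun x => h x ^ 2) Q)
    (ε : ℝ) (hε : 0 < ε) :
    ∀ᵐ ω ∂μ, Tendsto
      (fun n => ∫ x in {x | ε * Real.sqrt n < |h x|}, h x ^ 2 ∂(Qhat n ω))
      atTop (nhds 0) := by
  -- truncated tail functions
  set g : ℕ → E → ℝ :=
    fun M x => Set.indicator {x | (M : ℝ) < |h x|} (fun x => h x ^ 2) x with hg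
  have hTmeas : ∀ M : ℕ, MeasurableSet {x : E | (M : ℝ) < |h x|} := by
    intro M
    exact measurableSet_lt measurable_const hmeas.abs
  have hgint : ∀ M : ℕ, Integrable (g M) Q := fun M => hL2.indicator (hTmeas M)
  -- Q(g M) → 0 as M → ∞
  have hQlim : Tendsto (fun M : ℕ => ∫ x, g M x ∂Q) atTop (nhds 0) := by
    have := tendsto_integral_of_dominated_convergence (μ := Q)
      (F := fun M x => g M x) (f := fun _ => (0 : ℝ)) (bound := fun x => h x ^ 2)
      (fun M => ((hgint M).aestronglyMeasurable))
      hL2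
      (fun M => Filter.Eventually.of_forall (fun x => by
        rw [Real.norm_eq_abs]
        by_cases hx : x ∈ {x : E | (M : ℝ) < |h x|}
        · simp [hg, Set.indicator_of_mem hx, abs_of_nonneg (sq_nonneg (h x))]
        · simp [hg, Set.indicator_of_notMem hx, sq_nonneg]))
      (Filter.Eventually.of_forall (fun x => by
        obtain ⟨M₀, hM₀⟩ := exists_nat_ge (|h x|)
        refine tendsto_const_nhds.congr' ?_
        filter_upwards [eventually_ge_atTop M₀] with M hM
        simp only [hg]
        rw [Set.indicator_of_notMem]
        simp only [Set.mem_setOf_eq, not_lt]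
        exact hM₀.trans (by exact_mod_cast hM)))
    simpa using this
  -- a.s. convergence for each g M simultaneously
  have hae : ∀ᵐ ω ∂μ, ∀ M : ℕ,
      Tendsto (fun n => ∫ x, g M x ∂(Qhat n ω)) atTop (nhds (∫ x, g M x ∂Q)) := by
    rw [ae_all_iff]
    exact fun M => hconv (g M) (hgint M)
  filter_upwards [hae] with ω hω
  rw [NormedAddCommGroup.tendsto_nhds_zero]
  intro δ hδ
  -- choose M with Q(g M) < δ
  obtain ⟨M, hM⟩ : ∃ M : ℕ, ∫ x, g M x ∂Q < δ := by
    have := hQlim.eventually_lt_const hδ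
    exact this.exists
  -- eventually ∫ g M dQ̂ₙ < δ
  have hA : ∀ᶠ n in atTop, ∫ x, g M x ∂(Qhat n ω) < δ :=
    (hω M).eventually_lt_const hM
  -- eventually M ≤ ε √n
  have hB : ∀ᶠ n : ℕ in atTop, (M : ℝ) ≤ ε * Real.sqrt n := by
    obtain ⟨N, hN⟩ := exists_nat_ge (((M : ℝ) / ε) ^ 2)
    filter_upwards [eventually_ge_atTop N] with n hn
    have h1 : ((M : ℝ) / ε) ^ 2 ≤ (n : ℝ) := hN.trans (Nat.cast_le.2 hn)
    have h2 : (M : ℝ) / ε ≤ Real.sqrt n := by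
      rw [show ((M : ℝ) / ε) = Real.sqrt (((M : ℝ) / ε) ^ 2) from
        (Real.sqrt_sq (div_nonneg (Nat.cast_nonneg M) hε.le)).symm]
      exact Real.sqrt_le_sqrt h1
    calc (M : ℝ) = ε * ((M : ℝ) / ε) := by field_simp
      _ ≤ ε * Real.sqrt n := by
          exact mul_le_mul_of_nonneg_left h2 hε.le
  filter_upwards [hA, hB] with n hn1 hn2
  haveI := hQhat n ω
  set ν := Qhat n ω with hν
  set S : Set E := {x | ε * Real.sqrt n < |h x|} with hS
  set T : Set E := {x | (M : ℝ) < |h x|} with hT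
  have hSmeas : MeasurableSet S := measurableSet_lt measurable_const hmeas.abs
  have hST : S ⊆ T := fun x hx => lt_of_le_of_lt hn2 hx
  have hnn : 0 ≤ ∫ x in S, h x ^ 2 ∂ν :=
    setIntegral_nonneg hSmeas (fun x _ => sq_nonneg _)
  rw [Real.norm_eq_abs, abs_of_nonneg hnn]
  by_cases hint : IntegrableOn (fun x => h x ^ 2) S ν
  · -- h² is integrable on T = S ∪ (T \ S), since it is bounded on T \ S
    have hTS : IntegrableOn (fun x => h x ^ 2) (T \ S) ν := by
      refine Integrable.mono' (integrable_const ((ε * Real.sqrt n) ^ 2))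
        (hmeas.pow_const 2).aestronglyMeasurable ?_
      refine (ae_restrict_iff' ((hTmeas M).diff hSmeas)).2 ?_
      refine Filter.Eventually.of_forall (fun x hx => ?_)
      rw [Real.norm_eq_abs, abs_of_nonneg (sq_nonneg _)]
      have hxle : |h x| ≤ ε * Real.sqrt n := by
        have := hx.2
        simp only [hS, Set.mem_setOf_eq, not_lt] at this
        exact this
      calc h x ^ 2 = |h x| ^ 2 := (sq_abs _).symm
        _ ≤ (ε * Real.sqrt n) ^ 2 := by
            exact pow_le_pow_left₀ (abs_nonneg _) hxle 2
    have hTint : IntegrableOn (fun x => h x ^ 2) T ν := by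
      have : IntegrableOn (fun x => h x ^ 2) (S ∪ (T \ S)) ν := hint.union hTS
      exact this.mono_set (fun x hx => by
        by_cases hxS : x ∈ S
        · exact Or.inl hxS
        · exact Or.inr ⟨hx, hxS⟩)
    have hle : ∫ x in S, h x ^ 2 ∂ν ≤ ∫ x in T, h x ^ 2 ∂ν := by
      refine setIntegral_mono_set hTint ?_ (HasSubset.Subset.eventuallyLE hST)
      exact Filter.Eventually.of_forall (fun x => sq_nonneg _)
    have heq : ∫ x in T, h x ^ 2 ∂ν = ∫ x, g M x ∂ν := by
      rw [hg]
      exact (integral_indicator (hTmeas M)).symm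
    calc ∫ x in S, h x ^ 2 ∂ν ≤ ∫ x in T, h x ^ 2 ∂ν := hle
      _ = ∫ x, g M x ∂ν := heq
      _ < δ := hn1
  · rw [integral_undef hint]
    exact hδ
end
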